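/- Let F be a real polynomial of degree less than N with coefficients F_0, …, F_{N−1}, for r ≥ 0 let α*_r F denote the remainder on dividing ∑_{k=0}^{N−1} α_{r,k}·F_k·X^{k+r} by X^N − 1, and let z ∈ ℂ satisfy z^N = 1. Then the series ∑_{r=0}^∞ (α*_r F)(z) converges and equals F(α(z)) = ∑_{k=0}^{N−1} F_k·α(z)^k, where α(z) := ∑_{r=0}^∞ α_{r,1} z^{r+1}. -/

import Mathlib

/-!
Write `t = -2^(-b)`. The coefficients factor as `α_{r,k} = R_r(k/N) t^r`, where
`R_r(x) = x / (x + r/N) * C(x + r/N, r)` is a Rothe–Gould polynomial, so the Rothe–Hagen identity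
`∑_{i+j=n} R_i(x) R_j(y) = R_n(x + y)` gives `∑_{i+j=n} α_{i,k} α_{j,l} = α_{n,k+l}`. The bound
`|α_{r,k}| ≤ e^(2k) (e 2^(-b))^r` makes all series absolutely convergent on `|z| = 1`, and Cauchy
products then give `∑_r α_{r,k} z^(r+k) = α(z)^k`. Since `z^N = 1`, reducing modulo `X^N - 1` does
not change values at `z`, so `∑_r (α*_r F)(z) = ∑_k F_k ∑_r α_{r,k} z^(r+k)`.
-/

open Polynomial

/-- Generalized binomial coefficient `C(x, r) = x (x-1) ⋯ (x-r+1) / r!`. -/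
noncomputable def gbc (x : ℝ) (r : ℕ) : ℝ :=
  (∏ j ∈ Finset.range r, (x - j)) / (r.factorial : ℝ)

/-- `α_{0,k} = 1` and `α_{r,k} = (k/(rN)) C((k+r)/N - 1, r-1) (-2^(-b))^r` for `r ≥ 1`. -/
noncomputable def alphaC (b N r k : ℕ) : ℝ :=
  if r = 0 then 1
  else ((k : ℝ) / (r * N)) * gbc (((k : ℝ) + r) / N - 1) (r - 1) * (-(2:ℝ) ^ (-(b:ℤ))) ^ r

/-- `α*_r F`: the remainder of `∑_{k<N} α_{r,k} F_k X^(k+r)` modulo `X^N - 1`. -/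
noncomputable def astar (b N r : ℕ) (F : Polynomial ℝ) : Polynomial ℝ :=
  (∑ k ∈ Finset.range N, C (alphaC b N r k * F.coeff k) * X ^ (k + r)) %ₘ (X ^ N - 1)

/-- The function `α(z) = ∑ α_{r,1} z^(r+1)`. -/
noncomputable def alphaF (b N : ℕ) (z : ℂ) : ℂ :=
  ∑' r : ℕ, (alphaC b N r 1 : ℂ) * z ^ (r + 1)

open Finset

theorem Polynomial.eq_of_eval_natCast_eq {R : Type*} [CommRing R] [IsDomain R] [CharZero R]
    {p q : R[X]} (h : ∀ n : ℕ, p.eval (n : R) = q.eval (n : R)) : p = q :=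
  p.eq_of_infinite_eval_eq q <|
    (Set.infinite_range_of_injective Nat.cast_injective).mono <| by rintro _ ⟨n, rfl⟩; exact h n

/-- `rothePoly u n` is the Rothe–Gould polynomial `x / (x + n u) * C(x + n u, n)` in `x`. -/
noncomputable def rothePoly (u : ℝ) : ℕ → ℝ[X]
  | 0 => 1
  | n + 1 =>
    C ((n + 1).factorial : ℝ)⁻¹ * X * ∏ j ∈ range n, (X + C ((n + 1) * u - (j + 1)))

theorem rothePoly_eval_zero (u x : ℝ) : (rothePoly u 0).eval x = 1 := eval_one

theorem rothePoly_eval_succ (u x : ℝ) (n : ℕ) :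
    (rothePoly u (n + 1)).eval x =
      ((n + 1).factorial : ℝ)⁻¹ * x * ∏ j ∈ range n, (x + (n + 1) * u - (j + 1)) := by
  simp only [rothePoly, eval_mul, eval_C, eval_X, eval_prod, eval_add, add_sub_assoc]

theorem rothePoly_eval_zero_succ (u : ℝ) (n : ℕ) : (rothePoly u (n + 1)).eval 0 = 0 := by
  simp [rothePoly_eval_succ]

theorem rothePoly_eval_add_one (u x : ℝ) (n : ℕ) :
    (rothePoly u (n + 1)).eval (x + 1) =
      (rothePoly u (n + 1)).eval x + (rothePoly u n).eval (x + u) := by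
  cases n with
  | zero => simp [rothePoly_eval_succ, rothePoly_eval_zero]
  | succ m =>
    simp only [rothePoly_eval_succ]
    set P := ∏ j ∈ range m, (x + (m + 1 + 1) * u - (j + 1))
    have h₁ : ∏ j ∈ range (m + 1), (x + 1 + ((m + 1 : ℕ) + 1) * u - (j + 1)) =
        P * (x + (m + 1 + 1) * u) := by
      rw [prod_range_succ']
      push_cast
      congr 1
      · exact prod_congr rfl fun j _ => by ring
      · ring
    have h₂ : ∏ j ∈ range (m + 1), (x + ((m + 1 : ℕ) + 1) * u - (j + 1)) =
        P * (x + (m + 1 + 1) * u - (m + 1)) := by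
      rw [prod_range_succ]
      push_cast
      rfl
    have h₃ : ∏ j ∈ range m, (x + u + ((m : ℕ) + 1) * u - (j + 1)) = P :=
      prod_congr rfl fun j _ => by ring
    rw [h₁, h₂, h₃, Nat.factorial_succ (m + 1)]
    push_cast
    field_simp
    ring

theorem rothePoly_convolution (u : ℝ) (n : ℕ) (x y : ℝ) :
    ∑ p ∈ antidiagonal n, (rothePoly u p.1).eval x * (rothePoly u p.2).eval y =
      (rothePoly u n).eval (x + y) := by
  induction n generalizing x with
  | zero => simp [rothePoly_eval_zero]
  | succ n ih =>
    -- Both sides are polynomials in `x` that agree at `0` and have the same forward difference.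
    let lhs : ℝ[X] :=
      ∑ p ∈ antidiagonal (n + 1), rothePoly u p.1 * C ((rothePoly u p.2).eval y)
    let rhs : ℝ[X] := (rothePoly u (n + 1)).comp (X + C y)
    have eval_lhs (x : ℝ) : lhs.eval x =
        ∑ p ∈ antidiagonal (n + 1), (rothePoly u p.1).eval x * (rothePoly u p.2).eval y := by
      simp [lhs, eval_finsetSum]
    have eval_rhs (x : ℝ) : rhs.eval x = (rothePoly u (n + 1)).eval (x + y) := by
      simp [rhs]
    have lhs_add_one (x : ℝ) :
        lhs.eval (x + 1) = lhs.eval x + (rothePoly u n).eval (x + u + y) := by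
      simp only [eval_lhs, Nat.sum_antidiagonal_succ, rothePoly_eval_add_one, add_mul,
        sum_add_distrib, ih, rothePoly_eval_zero]
      ring
    have : lhs = rhs := Polynomial.eq_of_eval_natCast_eq fun m => by
      induction m with
      | zero => simp [eval_lhs, eval_rhs, Nat.sum_antidiagonal_succ, rothePoly_eval_zero_succ,
          rothePoly_eval_zero]
      | succ m ihm =>
        rw [Nat.cast_succ, lhs_add_one, ihm, eval_rhs, eval_rhs, add_right_comm (m : ℝ) 1 y,
          rothePoly_eval_add_one, add_right_comm (m : ℝ) u y]
    rw [← eval_lhs, ← eval_rhs, this]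

theorem alphaC_eq_rothePoly {N : ℕ} (hN : N ≠ 0) (b r k : ℕ) :
    alphaC b N r k =
      (rothePoly (N : ℝ)⁻¹ r).eval ((k : ℝ) / N) * (-(2 : ℝ) ^ (-(b : ℤ))) ^ r := by
  cases r with
  | zero => simp [alphaC, rothePoly_eval_zero]
  | succ m =>
    have hN' : (N : ℝ) ≠ 0 := Nat.cast_ne_zero.2 hN
    have factor (j : ℕ) : ((k : ℝ) + (m + 1 : ℕ)) / N - 1 - j =
        k / N + (m + 1) * (N : ℝ)⁻¹ - (j + 1) := by
      field_simp
      push_cast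
      ring
    rw [alphaC, if_neg m.succ_ne_zero, rothePoly_eval_succ, gbc, Nat.add_sub_cancel,
      Nat.factorial_succ, prod_congr rfl fun j _ => factor j]
    push_cast
    field_simp

theorem alphaC_convolution {N : ℕ} (hN : N ≠ 0) (b n K L : ℕ) :
    ∑ p ∈ antidiagonal n, alphaC b N p.1 K * alphaC b N p.2 L = alphaC b N n (K + L) := by
  simp only [alphaC_eq_rothePoly hN]
  set t := -(2 : ℝ) ^ (-(b : ℤ))
  set R := rothePoly (N : ℝ)⁻¹
  calc ∑ p ∈ antidiagonal n, (R p.1).eval ((K : ℝ) / N) * t ^ p.1 *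
        ((R p.2).eval ((L : ℝ) / N) * t ^ p.2)
      = (∑ p ∈ antidiagonal n, (R p.1).eval ((K : ℝ) / N) * (R p.2).eval ((L : ℝ) / N)) *
          t ^ n := by
        rw [sum_mul]
        refine sum_congr rfl fun p hp => ?_
        rw [← mem_antidiagonal.1 hp, pow_add]
        ring
    _ = _ := by rw [rothePoly_convolution, Nat.cast_add, add_div]

theorem prod_max_le_factorial_mul_exp {c : ℝ} (hc : 0 ≤ c) (m : ℕ) :
    ∏ j ∈ range m, max ((j : ℝ) + 1) c ≤ m.factorial * Real.exp c := by
  induction m with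
  | zero => simp [hc]
  | succ m ih =>
    rcases le_or_gt c (m + 1) with hcm | hcm
    · rw [prod_range_succ, max_eq_left hcm, Nat.factorial_succ, Nat.cast_mul, Nat.cast_succ]
      nlinarith [Real.exp_pos c]
    · have hc_max : ∀ j ∈ range (m + 1), max ((j : ℝ) + 1) c = c := fun j hj =>
        max_eq_right <| by
          have : (j : ℝ) ≤ m := Nat.cast_le.2 (Nat.lt_succ_iff.1 (mem_range.1 hj))
          linarith
      rw [prod_congr rfl hc_max, prod_const, card_range, ← div_le_iff₀' (by positivity)]
      exact Real.pow_div_factorial_le_exp _ hc _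

theorem abs_gbc_le_exp {x : ℝ} (hx : -1 ≤ x) (m : ℕ) : |gbc x m| ≤ Real.exp (x + 1) := by
  have hfac : (0 : ℝ) < m.factorial := by positivity
  rw [gbc, abs_div, abs_of_pos hfac, div_le_iff₀' hfac, abs_prod]
  calc ∏ j ∈ range m, |x - j| ≤ ∏ j ∈ range m, max ((j : ℝ) + 1) (x + 1) := by
        refine prod_le_prod (fun _ _ => abs_nonneg _) fun j _ => abs_le.2 ⟨?_, ?_⟩
        · linarith [le_max_left ((j : ℝ) + 1) (x + 1)]
        · linarith [le_max_right ((j : ℝ) + 1) (x + 1), (Nat.cast_nonneg j : (0 : ℝ) ≤ j)]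
    _ ≤ _ := prod_max_le_factorial_mul_exp (by linarith) m

theorem abs_alphaC_le {N : ℕ} (hN : 1 ≤ N) (b r k : ℕ) :
    |alphaC b N r k| ≤ Real.exp k ^ 2 * (Real.exp 1 * 2 ^ (-(b : ℤ))) ^ r := by
  cases r with
  | zero => simp [alphaC]
  | succ m =>
    have hN' : (1 : ℝ) ≤ N := Nat.one_le_cast.2 hN
    have hk : (k : ℝ) / ((m + 1 : ℕ) * N) ≤ Real.exp k := by
      have : (1 : ℝ) ≤ (m + 1 : ℕ) * N :=
        one_le_mul_of_one_le_of_one_le (Nat.one_le_cast.2 m.succ_pos) hN'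
      calc (k : ℝ) / ((m + 1 : ℕ) * N) ≤ k := div_le_self k.cast_nonneg this
        _ ≤ Real.exp k := by linarith [Real.add_one_le_exp (k : ℝ)]
    have hgbc : |gbc (((k : ℝ) + (m + 1 : ℕ)) / N - 1) m| ≤ Real.exp (k + (m + 1 : ℕ)) := by
      have hx : (0 : ℝ) ≤ ((k : ℝ) + (m + 1 : ℕ)) / N := by positivity
      refine (abs_gbc_le_exp (by linarith) m).trans ?_
      rw [sub_add_cancel, Real.exp_le_exp]
      exact div_le_self (by positivity) hN'
    calc |alphaC b N (m + 1) k|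
        = (k : ℝ) / ((m + 1 : ℕ) * N) * |gbc (((k : ℝ) + (m + 1 : ℕ)) / N - 1) m| *
            (2 ^ (-(b : ℤ))) ^ (m + 1) := by
          rw [alphaC, if_neg m.succ_ne_zero, Nat.add_sub_cancel, abs_mul, abs_mul, abs_pow,
            abs_neg, abs_of_pos (zpow_pos (two_pos : (0 : ℝ) < 2) (-(b : ℤ))),
            abs_of_nonneg (by positivity : (0 : ℝ) ≤ k / ((m + 1 : ℕ) * N))]
      _ ≤ Real.exp k * Real.exp (k + (m + 1 : ℕ)) * (2 ^ (-(b : ℤ))) ^ (m + 1) := by gcongr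
      _ = _ := by rw [Real.exp_add, ← Real.exp_one_pow (m + 1)]; ring

theorem exp_one_mul_two_zpow_neg_lt_one {b : ℕ} (hb : 2 ≤ b) :
    Real.exp 1 * 2 ^ (-(b : ℤ)) < 1 := by
  have h2 : (2 : ℝ) ^ (-(b : ℤ)) ≤ 1 / 4 :=
    calc (2 : ℝ) ^ (-(b : ℤ)) ≤ 2 ^ (-2 : ℤ) := zpow_le_zpow_right₀ one_le_two (by omega)
      _ = 1 / 4 := by norm_num
  nlinarith [Real.exp_one_lt_d9, Real.exp_pos 1, zpow_pos (two_pos : (0 : ℝ) < 2) (-(b : ℤ))]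

theorem summable_abs_alphaC {b N : ℕ} (hb : 2 ≤ b) (hN : 1 ≤ N) (k : ℕ) :
    Summable fun r => |alphaC b N r k| :=
  .of_nonneg_of_le (fun _ => abs_nonneg _) (abs_alphaC_le hN b · k) <|
    (summable_geometric_of_lt_one (by positivity) (exp_one_mul_two_zpow_neg_lt_one hb)).mul_left _

theorem hasSum_alphaC_mul_pow {b N : ℕ} (hb : 2 ≤ b) (hN : 1 ≤ N) {z : ℂ} (hz : ‖z‖ = 1)
    (K : ℕ) : HasSum (fun r => (alphaC b N r K : ℂ) * z ^ (r + K)) (alphaF b N z ^ K) := by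
  have summable_norm (k : ℕ) : Summable fun r => ‖(alphaC b N r k : ℂ) * z ^ (r + k)‖ := by
    simpa [norm_mul, norm_pow, hz] using summable_abs_alphaC hb hN k
  induction K with
  | zero =>
    rw [pow_zero]
    convert hasSum_ite_eq 0 (1 : ℂ) with r
    split_ifs with hr <;> simp [alphaC, hr]
  | succ K ih =>
    have hα : HasSum (fun r => (alphaC b N r 1 : ℂ) * z ^ (r + 1)) (alphaF b N z) :=
      (summable_norm 1).of_norm.hasSum
    have cauchy := (summable_norm_sum_mul_antidiagonal_of_summable_norm
      (summable_norm K) (summable_norm 1)).of_norm.hasSum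
    rw [← tsum_mul_tsum_eq_tsum_sum_antidiagonal_of_summable_norm (summable_norm K)
      (summable_norm 1), ih.tsum_eq, hα.tsum_eq, ← pow_succ] at cauchy
    refine cauchy.congr_fun fun n => ?_
    rw [← alphaC_convolution (by omega) b n K 1]
    push_cast
    rw [sum_mul]
    refine sum_congr rfl fun p hp => ?_
    rw [← mem_antidiagonal.1 hp]
    ring

theorem aeval_astar {N : ℕ} {z : ℂ} (hz : z ^ N = 1) (b r : ℕ) (F : ℝ[X]) :
    aeval z (astar b N r F) =
      ∑ k ∈ range N, (F.coeff k : ℂ) * ((alphaC b N r k : ℂ) * z ^ (r + k)) := by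
  rw [astar, aeval_modByMonic_eq_self_of_root (by simp [hz]), map_sum]
  refine sum_congr rfl fun k _ => ?_
  simp only [map_mul, aeval_C, map_pow, aeval_X, Complex.coe_algebraMap]
  ring

theorem astar_evaluation_general (b N : ℕ) (hb : 4 ≤ b) (hN : 3 ≤ N)
    (F : Polynomial ℝ) (z : ℂ) (hz : z ^ N = 1) :
    HasSum (fun r : ℕ => Polynomial.aeval z (astar b N r F))
      (∑ k ∈ Finset.range N, (F.coeff k : ℂ) * (alphaF b N z) ^ k) := by
  have hz_norm : ‖z‖ = 1 := Complex.norm_eq_one_of_pow_eq_one hz (by omega)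
  simp_rw [aeval_astar hz]
  exact hasSum_sum fun k _ =>
    (hasSum_alphaC_mul_pow (by omega) (by omega) hz_norm k).mul_left _

/-- if `z^N = 1`, then `∑_r (α*_r F)(z)` converges to
`F(α(z)) = ∑_{k<N} F_k α(z)^k`. -/
theorem astar_evaluation (b N : ℕ) (hb : 4 ≤ b) (hN : 3 ≤ N)
    (F : Polynomial ℝ) (hF : F.natDegree < N) (z : ℂ) (hz : z ^ N = 1) :
    HasSum (fun r : ℕ => Polynomial.aeval z (astar b N r F))
      (∑ k ∈ Finset.range N, (F.coeff k : ℂ) * (alphaF b N z) ^ k) :=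
  astar_evaluation_general b N hb hN F z hz
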